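/- arXiv:1907.00243 — 2 statements merged into one kernel-verified Lean document; each statement's English description precedes it below -/
import Mathlib

section
/- Let φ: F_Y → F_X be a non-degenerate homomorphism of free groups and let x, y ∈ Y ∪ Y⁻¹ with y ∉ {x, x⁻¹}. Suppose the cancellation in φ(x)φ(y)⁻¹ is of type 2, i.e., φ(x) = u₀·t and φ(y) = v₀·t with u₀, v₀, t all nontrivial and no cancellation in u₀·v₀⁻¹. Define ψ: F_Y → F_{Y ⊔ {s}} by ψ(x) = xs, ψ(y) = ys, ψ(z) = z for other generators, and φ': F_{Y ⊔ {s}} → F_X by φ'(x) = u₀, φ'(y) = v₀, φ'(s) = t, φ'(z) = φ(z) otherwise. Then φ = φ' ∘ ψ and φ' is non-degenerate. -/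
/-- Reduced word length of a free group element. -/
def len {α : Type*} [DecidableEq α] (w : FreeGroup α) : ℕ := w.toWord.length

/-- The free group element corresponding to a single letter (generator or inverse). -/
def lett {α : Type*} (p : α × Bool) : FreeGroup α := FreeGroup.mk [p]

/-- A free group element is cyclically reduced if its last letter is not the
inverse of its first letter. -/
def CyclicallyReduced {α : Type*} [DecidableEq α] (w : FreeGroup α) : Prop :=
  ∀ x ∈ w.toWord.head?, ∀ y ∈ w.toWord.getLast?, y ≠ (x.1, !x.2)

/-- `H` is a free factor of `K`: `K` is the internal free product of `H` with some `L ≤ K`. -/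
def IsFreeFactorOf {G : Type*} [Group G] (H K : Subgroup G) : Prop :=
  H ≤ K ∧ ∃ L : Subgroup G, H ⊔ L = K ∧
    Function.Injective (Monoid.Coprod.lift H.subtype L.subtype)

/-- `H ≤ K` is an algebraic extension: no proper free factor `J` of `K` with `H ≤ J < K`. -/
def IsAlgebraicExtension {G : Type*} [Group G] (H K : Subgroup G) : Prop :=
  H ≤ K ∧ ¬ ∃ J : Subgroup G, IsFreeFactorOf J K ∧ H ≤ J ∧ J < K

lemma lett_true {α : Type*} (a : α) : lett (a, true) = FreeGroup.of a := rfl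

lemma lett_false {α : Type*} (a : α) : lett (a, false) = (FreeGroup.of a)⁻¹ := by
  show FreeGroup.mk [(a, false)] = (FreeGroup.mk [(a, true)])⁻¹
  rw [FreeGroup.inv_mk]; rfl

theorem stmt_10 (Y X : Type) [DecidableEq X]
    (φ : FreeGroup Y →* FreeGroup X) (hφ : ∀ y : Y, φ (FreeGroup.of y) ≠ 1)
    (x y : Y × Bool) (hxy : y.1 ≠ x.1)
    (u₀ v₀ t : FreeGroup X) (hu₀ : u₀ ≠ 1) (hv₀ : v₀ ≠ 1) (ht : t ≠ 1)
    (hx : φ (lett x) = u₀ * t) (hlx : len (u₀ * t) = len u₀ + len t)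
    (hy : φ (lett y) = v₀ * t) (hly : len (v₀ * t) = len v₀ + len t)
    (hnc : len (u₀ * v₀⁻¹) = len u₀ + len v₀) :
    ∃ (ψ : FreeGroup Y →* FreeGroup (Y ⊕ Unit))
      (φ' : FreeGroup (Y ⊕ Unit) →* FreeGroup X),
      ψ (lett x) = lett (Sum.inl x.1, x.2) * FreeGroup.of (Sum.inr ()) ∧
      ψ (lett y) = lett (Sum.inl y.1, y.2) * FreeGroup.of (Sum.inr ()) ∧
      (∀ z : Y, z ≠ x.1 → z ≠ y.1 → ψ (FreeGroup.of z) = FreeGroup.of (Sum.inl z)) ∧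
      φ' (lett (Sum.inl x.1, x.2)) = u₀ ∧
      φ' (lett (Sum.inl y.1, y.2)) = v₀ ∧
      φ' (FreeGroup.of (Sum.inr ())) = t ∧
      (∀ z : Y, z ≠ x.1 → z ≠ y.1 → φ' (FreeGroup.of (Sum.inl z)) = φ (FreeGroup.of z)) ∧
      φ = φ'.comp ψ ∧ (∀ g : Y ⊕ Unit, φ' (FreeGroup.of g) ≠ 1) := by
  classical
  obtain ⟨a, xb⟩ := x
  obtain ⟨c, yb⟩ := y
  simp only at hxy hx hy ⊢
  let s : FreeGroup (Y ⊕ Unit) := FreeGroup.of (Sum.inr ())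
  let ψ : FreeGroup Y →* FreeGroup (Y ⊕ Unit) := FreeGroup.lift (fun z =>
    if z = a then
      (if xb then FreeGroup.of (Sum.inl z) * s else s⁻¹ * FreeGroup.of (Sum.inl z))
    else if z = c then
      (if yb then FreeGroup.of (Sum.inl z) * s else s⁻¹ * FreeGroup.of (Sum.inl z))
    else FreeGroup.of (Sum.inl z))
  let φ' : FreeGroup (Y ⊕ Unit) →* FreeGroup X := FreeGroup.lift (fun g =>
    match g with
    | Sum.inr _ => t
    | Sum.inl z =>
      if z = a then (if xb then u₀ else u₀⁻¹)
      else if z = c then (if yb then v₀ else v₀⁻¹)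
      else φ (FreeGroup.of z))
  have hψa : ψ (FreeGroup.of a) =
      if xb then FreeGroup.of (Sum.inl a) * s else s⁻¹ * FreeGroup.of (Sum.inl a) := by
    show (FreeGroup.lift _) (FreeGroup.of a) = _
    rw [FreeGroup.lift_apply_of, if_pos rfl]
  have hψc : ψ (FreeGroup.of c) =
      if yb then FreeGroup.of (Sum.inl c) * s else s⁻¹ * FreeGroup.of (Sum.inl c) := by
    show (FreeGroup.lift _) (FreeGroup.of c) = _
    rw [FreeGroup.lift_apply_of, if_neg hxy, if_pos rfl]
  have hφ'a : φ' (FreeGroup.of (Sum.inl a)) = if xb then u₀ else u₀⁻¹ := by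
    show (FreeGroup.lift _) (FreeGroup.of (Sum.inl a)) = _
    rw [FreeGroup.lift_apply_of]
    dsimp only
    rw [if_pos rfl]
  have hφ'c : φ' (FreeGroup.of (Sum.inl c)) = if yb then v₀ else v₀⁻¹ := by
    show (FreeGroup.lift _) (FreeGroup.of (Sum.inl c)) = _
    rw [FreeGroup.lift_apply_of]
    dsimp only
    rw [if_neg hxy, if_pos rfl]
  have hφ's : φ' s = t := by
    show (FreeGroup.lift _) (FreeGroup.of (Sum.inr ())) = _
    rw [FreeGroup.lift_apply_of]
  have hψz : ∀ z : Y, z ≠ a → z ≠ c → ψ (FreeGroup.of z) = FreeGroup.of (Sum.inl z) := by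
    intro z h1 h2
    show (FreeGroup.lift _) (FreeGroup.of z) = _
    rw [FreeGroup.lift_apply_of, if_neg h1, if_neg h2]
  have hφ'z : ∀ z : Y, z ≠ a → z ≠ c →
      φ' (FreeGroup.of (Sum.inl z)) = φ (FreeGroup.of z) := by
    intro z h1 h2
    show (FreeGroup.lift _) (FreeGroup.of (Sum.inl z)) = _
    rw [FreeGroup.lift_apply_of]
    simp only [if_neg h1, if_neg h2]
  have hφa : φ (FreeGroup.of a) = if xb then u₀ * t else (u₀ * t)⁻¹ := by
    cases xb
    · rw [lett_false] at hx
      rw [if_neg Bool.false_ne_true, ← hx, map_inv, inv_inv]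
    · rw [lett_true] at hx
      rw [if_pos rfl, hx]
  have hφc : φ (FreeGroup.of c) = if yb then v₀ * t else (v₀ * t)⁻¹ := by
    cases yb
    · rw [lett_false] at hy
      rw [if_neg Bool.false_ne_true, ← hy, map_inv, inv_inv]
    · rw [lett_true] at hy
      rw [if_pos rfl, hy]
  refine ⟨ψ, φ', ?_, ?_, hψz, ?_, ?_, hφ's, hφ'z, ?_, ?_⟩
  · cases xb
    · rw [lett_false, lett_false, map_inv, hψa, if_neg Bool.false_ne_true,
        mul_inv_rev, inv_inv]
    · rw [lett_true, lett_true, hψa, if_pos rfl]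
  · cases yb
    · rw [lett_false, lett_false, map_inv, hψc, if_neg Bool.false_ne_true,
        mul_inv_rev, inv_inv]
    · rw [lett_true, lett_true, hψc, if_pos rfl]
  · cases xb
    · rw [lett_false, map_inv, hφ'a, if_neg Bool.false_ne_true, inv_inv]
    · rw [lett_true, hφ'a, if_pos rfl]
  · cases yb
    · rw [lett_false, map_inv, hφ'c, if_neg Bool.false_ne_true, inv_inv]
    · rw [lett_true, hφ'c, if_pos rfl]
  · apply FreeGroup.ext_hom
    intro z
    rw [MonoidHom.comp_apply]
    by_cases h1 : z = a
    · subst h1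
      rw [hψa, hφa]
      cases xb
      · rw [if_neg Bool.false_ne_true, if_neg Bool.false_ne_true, map_mul, map_inv,
          hφ's, hφ'a, if_neg Bool.false_ne_true, mul_inv_rev]
      · rw [if_pos rfl, if_pos rfl, map_mul, hφ's, hφ'a, if_pos rfl]
    · by_cases h2 : z = c
      · subst h2
        rw [hψc, hφc]
        cases yb
        · rw [if_neg Bool.false_ne_true, if_neg Bool.false_ne_true, map_mul, map_inv,
            hφ's, hφ'c, if_neg Bool.false_ne_true, mul_inv_rev]
        · rw [if_pos rfl, if_pos rfl, map_mul, hφ's, hφ'c, if_pos rfl]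
      · rw [hψz z h1 h2, hφ'z z h1 h2]
  · intro g
    match g with
    | Sum.inr u => cases u; rw [hφ's]; exact ht
    | Sum.inl z =>
      by_cases h1 : z = a
      · subst h1
        rw [hφ'a]
        cases xb
        · rw [if_neg Bool.false_ne_true]; exact inv_ne_one.mpr hu₀
        · rw [if_pos rfl]; exact hu₀
      · by_cases h2 : z = c
        · subst h2
          rw [hφ'c]
          cases yb
          · rw [if_neg Bool.false_ne_true]; exact inv_ne_one.mpr hv₀
          · rw [if_pos rfl]; exact hv₀
        · rw [hφ'z z h1 h2]; exact hφ z
end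

section
/- Let φ: F_Y → F_X be non-degenerate and x, y ∈ Y ∪ Y⁻¹ with y ∉ {x, x⁻¹}, such that φ(x) absorbs φ(y)⁻¹, i.e., φ(x) = u₀·φ(y) with u₀ nontrivial and no cancellation. Define ψ: F_Y → F_Y by ψ(x) = xy, fixing all other generators (an automorphism of F_Y), and φ' by φ'(x) = u₀ and φ'(z) = φ(z) for all other generators z. Then φ = φ' ∘ ψ, and Σ_{z∈Y} len(φ'(z)) < Σ_{z∈Y} len(φ(z)). -/
lemma len_inv {α : Type*} [DecidableEq α] (w : FreeGroup α) : len w⁻¹ = len w := by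
  simp [len, FreeGroup.toWord_inv, FreeGroup.invRev]

lemma len_pos {α : Type*} [DecidableEq α] {w : FreeGroup α} (h : w ≠ 1) : 0 < len w := by
  rw [len, List.length_pos_iff]
  simpa [FreeGroup.toWord_eq_nil_iff] using h

lemma lett_eq_ite {α : Type*} (p : α × Bool) :
    lett p = if p.2 then FreeGroup.of p.1 else (FreeGroup.of p.1)⁻¹ := by
  obtain ⟨a, b⟩ := p; cases b <;> simp [lett_true, lett_false]

lemma map_lett {α β : Type*} [Group β] (h : FreeGroup α →* β) (p : α × Bool) :
    h (lett p) = if p.2 then h (FreeGroup.of p.1) else (h (FreeGroup.of p.1))⁻¹ := by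
  obtain ⟨a, b⟩ := p
  cases b <;> simp [lett_true, lett_false]

theorem stmt_12 (Y X : Type) [Fintype Y] [DecidableEq X]
    (φ : FreeGroup Y →* FreeGroup X) (hφ : ∀ y : Y, φ (FreeGroup.of y) ≠ 1)
    (x y : Y × Bool) (hxy : y.1 ≠ x.1)
    (u₀ : FreeGroup X) (hu₀ : u₀ ≠ 1)
    (hx : φ (lett x) = u₀ * φ (lett y))
    (hnc : len (u₀ * φ (lett y)) = len u₀ + len (φ (lett y))) :
    ∃ (ψ : FreeGroup Y →* FreeGroup Y) (φ' : FreeGroup Y →* FreeGroup X),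
      Function.Bijective ψ ∧
      ψ (lett x) = lett x * lett y ∧
      (∀ z : Y, z ≠ x.1 → ψ (FreeGroup.of z) = FreeGroup.of z) ∧
      φ' (lett x) = u₀ ∧
      (∀ z : Y, z ≠ x.1 → φ' (FreeGroup.of z) = φ (FreeGroup.of z)) ∧
      φ = φ'.comp ψ ∧
      (∑ z : Y, len (φ' (FreeGroup.of z))) < ∑ z : Y, len (φ (FreeGroup.of z)) := by
  classical
  obtain ⟨a, bx⟩ := x
  replace hxy : y.1 ≠ a := hxy
  set ly : FreeGroup Y := lett y with hly
  have hlyY : ∀ (h : FreeGroup Y →* FreeGroup Y), h (FreeGroup.of y.1) = FreeGroup.of y.1 →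
      h ly = ly := by
    intro h hh
    rw [hly, map_lett, hh, ← lett_eq_ite]
  let f : Y → FreeGroup Y := fun z =>
    if z = a then (if bx then FreeGroup.of a * ly else ly⁻¹ * FreeGroup.of a) else FreeGroup.of z
  let g : Y → FreeGroup Y := fun z =>
    if z = a then (if bx then FreeGroup.of a * ly⁻¹ else ly * FreeGroup.of a) else FreeGroup.of z
  let ψ : FreeGroup Y →* FreeGroup Y := FreeGroup.lift f
  let ψ' : FreeGroup Y →* FreeGroup Y := FreeGroup.lift g
  have hψz : ∀ z : Y, z ≠ a → ψ (FreeGroup.of z) = FreeGroup.of z := by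
    intro z hz; simp [ψ, f, hz]
  have hψ'z : ∀ z : Y, z ≠ a → ψ' (FreeGroup.of z) = FreeGroup.of z := by
    intro z hz; simp [ψ', g, hz]
  have hψly : ψ ly = ly := hlyY ψ (hψz y.1 hxy)
  have hψ'ly : ψ' ly = ly := hlyY ψ' (hψ'z y.1 hxy)
  have hψa : ψ (FreeGroup.of a) = if bx then FreeGroup.of a * ly else ly⁻¹ * FreeGroup.of a := by
    simp [ψ, f]
  have hψ'a : ψ' (FreeGroup.of a) = if bx then FreeGroup.of a * ly⁻¹ else ly * FreeGroup.of a := by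
    simp [ψ', g]
  have hinv1 : ψ'.comp ψ = MonoidHom.id _ := by
    apply FreeGroup.ext_hom; intro z
    by_cases hz : z = a
    · subst hz
      cases bx <;>
        simp [MonoidHom.comp_apply, hψa, hψ'a, hψ'ly, mul_assoc]
    · simp [MonoidHom.comp_apply, hψz z hz, hψ'z z hz]
  have hinv2 : ψ.comp ψ' = MonoidHom.id _ := by
    apply FreeGroup.ext_hom; intro z
    by_cases hz : z = a
    · subst hz
      cases bx <;>
        simp [MonoidHom.comp_apply, hψa, hψ'a, hψly, mul_assoc]
    · simp [MonoidHom.comp_apply, hψz z hz, hψ'z z hz]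
  have hbij : Function.Bijective ψ := by
    refine Function.bijective_iff_has_inverse.2 ⟨ψ', ?_, ?_⟩
    · intro w; exact DFunLike.congr_fun hinv1 w
    · intro w; exact DFunLike.congr_fun hinv2 w
  let h : Y → FreeGroup X := fun z =>
    if z = a then (if bx then u₀ else u₀⁻¹) else φ (FreeGroup.of z)
  let φ' : FreeGroup Y →* FreeGroup X := FreeGroup.lift h
  have hφ'z : ∀ z : Y, z ≠ a → φ' (FreeGroup.of z) = φ (FreeGroup.of z) := by
    intro z hz; simp [φ', h, hz]
  have hφ'a : φ' (FreeGroup.of a) = if bx then u₀ else u₀⁻¹ := by simp [φ', h]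
  have hφ'ly : φ' ly = φ ly := by
    rw [hly, map_lett, map_lett, hφ'z y.1 hxy]
  have hψx : ψ (lett (a, bx)) = lett (a, bx) * ly := by
    cases bx
    · rw [lett_false, map_inv, hψa]; simp [lett_false, mul_assoc]
    · rw [lett_true, hψa]; simp [lett_true]
  have hφ'x : φ' (lett (a, bx)) = u₀ := by
    cases bx
    · rw [lett_false, map_inv, hφ'a]; simp
    · rw [lett_true, hφ'a]; simp
  have hφa : φ (FreeGroup.of a) = if bx then u₀ * φ ly else (u₀ * φ ly)⁻¹ := by
    cases bx
    · simp only [Bool.false_eq_true, if_false]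
      rw [← hx, lett_false, map_inv, inv_inv]
    · simp only [if_true]
      rw [← hx, lett_true]
  have hca : φ (FreeGroup.of a) = φ' (ψ (FreeGroup.of a)) := by
    cases bx <;>
      simp [hψa, hφ'a, hφ'ly, hφa, mul_comm]
  have hcomp : φ = φ'.comp ψ := by
    apply FreeGroup.ext_hom; intro z
    by_cases hz : z = a
    · subst hz; exact hca
    · simp [MonoidHom.comp_apply, hψz z hz, hφ'z z hz]
  have hlyne : φ ly ≠ 1 := by
    rw [hly, map_lett]
    cases y.2 <;> simp [hφ y.1]
  have hlen1 : len (φ' (FreeGroup.of a)) = len u₀ := by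
    rw [hφ'a]; cases bx <;> simp [len_inv]
  have hlen2 : len (φ (FreeGroup.of a)) = len u₀ + len (φ ly) := by
    rw [hφa]
    cases bx
    · rw [if_neg (by simp), len_inv, hnc]
    · rw [if_pos rfl, hnc]
  have hpos := len_pos hlyne
  refine ⟨ψ, φ', hbij, hψx, hψz, hφ'x, hφ'z, hcomp, ?_⟩
  refine Finset.sum_lt_sum ?_ ⟨a, Finset.mem_univ a, by omega⟩
  intro z _
  by_cases hz : z = a
  · subst hz; omega
  · rw [hφ'z z hz]
end
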